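/- arXiv:2601.10628 — 2 statements merged into one kernel-verified Lean document; each statement's English description precedes it below -/
import Mathlib

section
/- Let g be a standard normal random variable and let σ > 0, μ ∈ ℝ. Then E[ exp(c·|σg + μ|) ] / ( exp(c²σ²/2) · (exp(cμ) + exp(−cμ)) ) tends to 1 as c → ∞. -/
open MeasureTheory Real Filter ProbabilityTheory

lemma gauss01_eq : gaussianReal 0 1
    = volume.withDensity (fun x => ((gaussianPDFReal 0 1 x).toNNReal : ENNReal)) := by
  rw [gaussianReal_of_var_ne_zero 0 one_ne_zero]
  rfl

lemma pdf01_eq (x : ℝ) :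
    gaussianPDFReal 0 1 x = (Real.sqrt (2 * π))⁻¹ * Real.exp (-x ^ 2 / 2) := by
  simp [gaussianPDFReal]

lemma exp_shift (t x : ℝ) :
    gaussianPDFReal 0 1 x * Real.exp (t * x)
      = ((Real.sqrt (2 * π))⁻¹ * Real.exp (t ^ 2 / 2)) * Real.exp (-(1/2) * (x - t) ^ 2) := by
  rw [pdf01_eq, mul_assoc, ← Real.exp_add, mul_assoc, ← Real.exp_add]
  congr 1
  ring

lemma int_vol (t : ℝ) :
    Integrable (fun x => gaussianPDFReal 0 1 x * Real.exp (t * x)) := by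
  simp only [exp_shift]
  exact ((integrable_exp_neg_mul_sq one_half_pos).comp_sub_right t).const_mul _

lemma int_gauss (t : ℝ) :
    Integrable (fun x => Real.exp (t * x)) (gaussianReal 0 1) := by
  rw [gauss01_eq, integrable_withDensity_iff_integrable_smul
    (measurable_gaussianPDFReal 0 1).real_toNNReal]
  have hfe : (fun x => (gaussianPDFReal 0 1 x).toNNReal • Real.exp (t * x))
      = fun x => gaussianPDFReal 0 1 x * Real.exp (t * x) := by
    ext x
    rw [NNReal.smul_def, Real.coe_toNNReal _ (gaussianPDFReal_nonneg 0 1 x), smul_eq_mul]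
  rw [hfe]
  exact int_vol t

lemma gauss_mgf (t : ℝ) :
    ∫ x, Real.exp (t * x) ∂(gaussianReal 0 1) = Real.exp (t ^ 2 / 2) := by
  rw [gauss01_eq, integral_withDensity_eq_integral_smul
    (measurable_gaussianPDFReal 0 1).real_toNNReal]
  have : ∀ x : ℝ, (gaussianPDFReal 0 1 x).toNNReal • Real.exp (t * x)
      = ((Real.sqrt (2 * π))⁻¹ * Real.exp (t ^ 2 / 2)) * Real.exp (-(1/2) * (x - t) ^ 2) := by
    intro x
    rw [NNReal.smul_def, Real.coe_toNNReal _ (gaussianPDFReal_nonneg 0 1 x), smul_eq_mul,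
      exp_shift]
  rw [integral_congr_ae (Filter.Eventually.of_forall this), integral_const_mul]
  have hsub : ∫ x : ℝ, Real.exp (-(1/2) * (x - t) ^ 2)
      = ∫ x : ℝ, Real.exp (-(1/2) * x ^ 2) :=
    integral_sub_right_eq_self (fun x => Real.exp (-(1/2) * x ^ 2)) t
  rw [hsub, integral_gaussian]
  have h2 : π / (1/2 : ℝ) = 2 * π := by ring
  rw [h2, mul_comm ((Real.sqrt (2*π))⁻¹) _, mul_assoc,
    inv_mul_cancel₀ (by positivity : Real.sqrt (2*π) ≠ 0), mul_one]

/-- Large-`c` asymptotics of the Gaussian average: for standard normal `g`, `σ > 0` and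
`μ ∈ ℝ`, `E[exp(c|σg+μ|)] / (exp(c²σ²/2)·(exp(cμ) + exp(−cμ))) → 1` as `c → ∞`. -/
theorem stmt_9 (σ μ : ℝ) (hσ : 0 < σ) :
    Filter.Tendsto
      (fun c : ℝ =>
        (∫ x, Real.exp (c * |σ * x + μ|) ∂(ProbabilityTheory.gaussianReal 0 1)) /
          (Real.exp (c ^ 2 * σ ^ 2 / 2) * (Real.exp (c * μ) + Real.exp (-(c * μ)))))
      Filter.atTop (nhds 1) := by
  set γ := ProbabilityTheory.gaussianReal 0 1 with hγ
  set D : ℝ → ℝ := fun c => Real.exp (c ^ 2 * σ ^ 2 / 2) * (Real.exp (c * μ) + Real.exp (-(c * μ)))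
    with hD
  set R : ℝ → ℝ := fun c => ∫ x, Real.exp (-(c * |σ * x + μ|)) ∂γ with hR
  have hDpos : ∀ c, 0 < D c := fun c => by positivity
  -- integrability facts for a fixed c
  have hplus : ∀ c : ℝ, Integrable (fun x => Real.exp (c * (σ * x + μ))) γ := by
    intro c
    have h1 : (fun x => Real.exp (c * (σ * x + μ)))
        = fun x => Real.exp ((c * σ) * x) * Real.exp (c * μ) := by
      ext x; rw [← Real.exp_add]; ring_nf
    rw [h1]
    exact (int_gauss (c * σ)).mul_const _
  have hminus : ∀ c : ℝ, Integrable (fun x => Real.exp (-(c * (σ * x + μ)))) γ := by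
    intro c
    have h1 : (fun x => Real.exp (-(c * (σ * x + μ))))
        = fun x => Real.exp ((-(c * σ)) * x) * Real.exp (-(c * μ)) := by
      ext x; rw [← Real.exp_add]; ring_nf
    rw [h1]
    exact (int_gauss (-(c * σ))).mul_const _
  have hbound : ∀ (c : ℝ) (x : ℝ), Real.exp (c * |σ * x + μ|)
      ≤ Real.exp (c * (σ * x + μ)) + Real.exp (-(c * (σ * x + μ))) := by
    intro c x
    rcases abs_cases (σ * x + μ) with ⟨h, _⟩ | ⟨h, _⟩
    · rw [h]; exact le_add_of_nonneg_right (Real.exp_pos _).le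
    · rw [h, mul_neg]
      exact le_add_of_nonneg_left (Real.exp_pos _).le
  have hboundneg : ∀ (c : ℝ) (x : ℝ), Real.exp (-(c * |σ * x + μ|))
      ≤ Real.exp (c * (σ * x + μ)) + Real.exp (-(c * (σ * x + μ))) := by
    intro c x
    rcases abs_cases (σ * x + μ) with ⟨h, _⟩ | ⟨h, _⟩
    · rw [h]; exact le_add_of_nonneg_left (Real.exp_pos _).le
    · rw [h, mul_neg, neg_neg]
      exact le_add_of_nonneg_right (Real.exp_pos _).le
  have hmeas : ∀ c : ℝ, AEStronglyMeasurable (fun x => Real.exp (c * |σ * x + μ|)) γ := by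
    intro c
    exact (Real.continuous_exp.comp
      (continuous_const.mul ((continuous_const.mul continuous_id).add continuous_const).abs)
      ).aestronglyMeasurable
  have hintabs : ∀ c : ℝ, Integrable (fun x => Real.exp (c * |σ * x + μ|)) γ := by
    intro c
    refine ((hplus c).add (hminus c)).mono' (hmeas c)
      (Filter.Eventually.of_forall fun x => ?_)
    rw [Real.norm_eq_abs, abs_of_pos (Real.exp_pos _)]
    exact hbound c x
  have hintabsneg : ∀ c : ℝ, Integrable (fun x => Real.exp (-(c * |σ * x + μ|))) γ := by
    intro c
    have hm : AEStronglyMeasurable (fun x => Real.exp (-(c * |σ * x + μ|))) γ :=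
      (Real.continuous_exp.comp
        (continuous_const.mul ((continuous_const.mul continuous_id).add continuous_const).abs
        ).neg).aestronglyMeasurable
    refine ((hplus c).add (hminus c)).mono' hm (Filter.Eventually.of_forall fun x => ?_)
    rw [Real.norm_eq_abs, abs_of_pos (Real.exp_pos _)]
    exact hboundneg c x
  -- the key identity
  have hN : ∀ c : ℝ, (∫ x, Real.exp (c * |σ * x + μ|) ∂γ) = D c - R c := by
    intro c
    have hpt : ∀ x : ℝ, Real.exp (c * |σ * x + μ|)
        = (Real.exp (c * (σ * x + μ)) + Real.exp (-(c * (σ * x + μ))))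
          - Real.exp (-(c * |σ * x + μ|)) := by
      intro x
      rcases abs_cases (σ * x + μ) with ⟨h, _⟩ | ⟨h, _⟩
      · rw [h]; ring
      · rw [h, mul_neg, neg_neg]; ring
    have hadd : Integrable
        (fun x => Real.exp (c * (σ * x + μ)) + Real.exp (-(c * (σ * x + μ)))) γ :=
      (hplus c).add (hminus c)
    rw [integral_congr_ae (Filter.Eventually.of_forall hpt),
      integral_sub hadd (hintabsneg c),
      integral_add (hplus c) (hminus c)]
    have e1 : ∫ x, Real.exp (c * (σ * x + μ)) ∂γ
        = Real.exp (c ^ 2 * σ ^ 2 / 2) * Real.exp (c * μ) := by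
      have h1 : (fun x => Real.exp (c * (σ * x + μ)))
          = fun x => Real.exp ((c * σ) * x) * Real.exp (c * μ) := by
        ext x; rw [← Real.exp_add]; ring_nf
      rw [h1, integral_mul_const, gauss_mgf]
      congr 2
      ring
    have e2 : ∫ x, Real.exp (-(c * (σ * x + μ))) ∂γ
        = Real.exp (c ^ 2 * σ ^ 2 / 2) * Real.exp (-(c * μ)) := by
      have h1 : (fun x => Real.exp (-(c * (σ * x + μ))))
          = fun x => Real.exp ((-(c * σ)) * x) * Real.exp (-(c * μ)) := by
        ext x; rw [← Real.exp_add]; ring_nf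
      rw [h1, integral_mul_const, gauss_mgf]
      congr 2
      ring
    rw [e1, e2, hD, hR]
    ring
  -- the remainder goes to zero
  have hRD : Filter.Tendsto (fun c => R c / D c) Filter.atTop (nhds 0) := by
    have hupper : Filter.Tendsto (fun c : ℝ => (2 * Real.exp (c ^ 2 * σ ^ 2 / 2))⁻¹)
        Filter.atTop (nhds 0) := by
      apply Filter.Tendsto.inv_tendsto_atTop
      apply Filter.Tendsto.const_mul_atTop two_pos
      apply Real.tendsto_exp_atTop.comp
      have h1 : Filter.Tendsto (fun c : ℝ => c ^ 2) Filter.atTop Filter.atTop :=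
        tendsto_pow_atTop two_ne_zero
      have h2 := h1.atTop_mul_const (by positivity : (0:ℝ) < σ ^ 2 / 2)
      refine h2.congr fun c => by ring
    refine squeeze_zero' ?_ ?_ hupper
    · filter_upwards with c
      refine div_nonneg ?_ (hDpos c).le
      exact integral_nonneg fun x => (Real.exp_pos _).le
    · filter_upwards [Filter.eventually_ge_atTop (0:ℝ)] with c hc
      have hR1 : R c ≤ 1 := by
        have : R c ≤ ∫ _x, (1:ℝ) ∂γ := by
          refine integral_mono (hintabsneg c) (integrable_const 1) fun x => ?_
          rw [Real.exp_le_one_iff]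
          simp only [neg_nonpos]
          exact mul_nonneg hc (abs_nonneg _)
        simpa using this
      have hD2 : 2 * Real.exp (c ^ 2 * σ ^ 2 / 2) ≤ D c := by
        have hcosh : (2:ℝ) ≤ Real.exp (c * μ) + Real.exp (-(c * μ)) := by
          rw [Real.exp_neg]
          have hu := Real.exp_pos (c * μ)
          have huu : Real.exp (c * μ) * (Real.exp (c * μ))⁻¹ = 1 :=
            mul_inv_cancel₀ hu.ne'
          nlinarith [sq_nonneg (Real.exp (c * μ) - 1)]
        calc 2 * Real.exp (c ^ 2 * σ ^ 2 / 2)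
            = Real.exp (c ^ 2 * σ ^ 2 / 2) * 2 := by ring
          _ ≤ D c := by
              exact mul_le_mul_of_nonneg_left hcosh (Real.exp_pos _).le
      have := div_le_div₀ zero_le_one hR1 (by positivity) hD2
      simpa [one_div] using this
  -- conclude
  have hfinal : Filter.Tendsto (fun c => 1 - R c / D c) Filter.atTop (nhds 1) := by
    have := (tendsto_const_nhds :
      Filter.Tendsto (fun _ : ℝ => (1:ℝ)) Filter.atTop (nhds 1)).sub hRD
    simpa using this
  refine hfinal.congr fun c => ?_
  rw [hN c]
  field_simp
  rw [mul_assoc, show Real.exp (c ^ 2 * σ ^ 2 / 2) * (Real.exp (c * μ) + Real.exp (-(c * μ))) = D c from rfl,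
    sub_mul, one_mul, div_mul_cancel₀ _ (hDpos c).ne']
end

section
/- Let g be a standard normal random variable, let a > 0, B ≥ 0, κ ≥ 0 and η ∈ ℝ, and set s = √(1 + 2a²B). Then E[ exp( −B·(max(|a·g + η| − κ, 0))² ) ] = (1/s)·( exp(−B(η−κ)²/s²)·Φ((η−κ)/(a·s)) + exp(−B(η+κ)²/s²)·Φ(−(η+κ)/(a·s)) ) + Φ((κ−η)/a) − Φ((−κ−η)/a), where Φ denotes the standard normal CDF. -/
open MeasureTheory

/-- The standard normal CDF `Φ(x) = (1/√(2π)) ∫_{−∞}^x e^{−t²/2} dt`. -/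
noncomputable def stdGaussianCDF (x : ℝ) : ℝ :=
  (Real.sqrt (2 * Real.pi))⁻¹ * ∫ t in Set.Iic x, Real.exp (-t ^ 2 / 2)

private lemma shift_Ioi (g : ℝ → ℝ) (a d : ℝ) :
    ∫ x in Set.Ioi a, g (x + d) = ∫ x in Set.Ioi (a + d), g x := by
  rw [← integral_indicator measurableSet_Ioi, ← integral_indicator measurableSet_Ioi,
    ← integral_add_right_eq_self ((Set.Ioi (a + d)).indicator g) d]
  congr 1
  ext x
  simp only [Set.indicator_apply, Set.mem_Ioi, add_lt_add_iff_right]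

private lemma int_Ioi (p q r : ℝ) (hp : 0 < p) :
    ∫ x in Set.Ioi r, Real.exp (-(p * x + q) ^ 2 / 2)
      = p⁻¹ * ∫ t in Set.Iic (-(p * r + q)), Real.exp (-t ^ 2 / 2) := by
  have h1 : ∫ x in Set.Ioi r, Real.exp (-(p * x + q) ^ 2 / 2)
      = p⁻¹ * ∫ y in Set.Ioi (p * r), Real.exp (-(y + q) ^ 2 / 2) := by
    simpa using MeasureTheory.integral_comp_mul_left_Ioi
      (fun y => Real.exp (-(y + q) ^ 2 / 2)) r hp
  rw [h1, shift_Ioi (fun u => Real.exp (-u ^ 2 / 2)) (p * r) q]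
  congr 1
  have h2 := integral_comp_neg_Ioi (p * r + q) (fun t => Real.exp (-t ^ 2 / 2))
  simp only [neg_sq] at h2
  exact h2

private lemma int_Iic (p q r : ℝ) (hp : 0 < p) :
    ∫ x in Set.Iic r, Real.exp (-(p * x + q) ^ 2 / 2)
      = p⁻¹ * ∫ t in Set.Iic (p * r + q), Real.exp (-t ^ 2 / 2) := by
  have h1 : ∫ x in Set.Iic r, Real.exp (-(p * x + q) ^ 2 / 2)
      = ∫ x in Set.Ioi (-r), Real.exp (-(p * x + -q) ^ 2 / 2) := by
    have h := integral_comp_neg_Iic r (fun y => Real.exp (-(p * y + -q) ^ 2 / 2))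
    rw [← h]
    refine setIntegral_congr_fun measurableSet_Iic fun x _ => ?_
    ring_nf
  rw [h1, int_Ioi p (-q) (-r) hp]
  have : -(p * -r + -q) = p * r + q := by ring
  rw [this]

/-- Three-piece closed form of the inner Gaussian average of the SBP spherical dual
term: with `s = √(1+2a²B)`,
`E[exp(−B(max(|ag+η|−κ,0))²)] = (1/s)(e^{−B(η−κ)²/s²}Φ((η−κ)/(as)) + e^{−B(η+κ)²/s²}Φ(−(η+κ)/(as))) + Φ((κ−η)/a) − Φ((−κ−η)/a)`. -/
theorem stmt_12 (a B κ η s : ℝ) (ha : 0 < a) (hB : 0 ≤ B) (hκ : 0 ≤ κ)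
    (hs : s = Real.sqrt (1 + 2 * a ^ 2 * B)) :
    ∫ x, Real.exp (-(B * max (|a * x + η| - κ) 0 ^ 2))
        ∂(ProbabilityTheory.gaussianReal 0 1) =
      (1 / s) *
        (Real.exp (-(B * (η - κ) ^ 2) / s ^ 2) * stdGaussianCDF ((η - κ) / (a * s)) +
          Real.exp (-(B * (η + κ) ^ 2) / s ^ 2) * stdGaussianCDF (-((η + κ) / (a * s)))) +
      stdGaussianCDF ((κ - η) / a) - stdGaussianCDF ((-κ - η) / a) := by
  have hq : (0:ℝ) < 1 + 2 * a ^ 2 * B := by positivity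
  have hspos : 0 < s := by rw [hs]; exact Real.sqrt_pos.mpr hq
  have hs2 : s ^ 2 = 1 + 2 * a ^ 2 * B := by rw [hs, Real.sq_sqrt hq.le]
  set C : ℝ := (Real.sqrt (2 * Real.pi))⁻¹ with hC
  have hCpos : 0 < C := by
    rw [hC]; exact inv_pos.mpr (Real.sqrt_pos.mpr (by positivity))
  set f : ℝ → ℝ := fun x => Real.exp (-(B * max (|a * x + η| - κ) 0 ^ 2)) with hf
  set φ : ℝ → ℝ := fun x => C * Real.exp (-x ^ 2 / 2) with hφ
  have hpdf : ∀ x, ProbabilityTheory.gaussianPDFReal 0 1 x = φ x := by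
    intro x
    simp [ProbabilityTheory.gaussianPDFReal, hφ, hC]
  have hpdfe : ProbabilityTheory.gaussianPDFReal 0 1 = φ := funext hpdf
  -- Step 1: rewrite the Gaussian integral as a Lebesgue integral against the density
  have step1 : (∫ x, f x ∂(ProbabilityTheory.gaussianReal 0 1)) = ∫ x, φ x * f x := by
    rw [ProbabilityTheory.gaussianReal_of_var_ne_zero 0 one_ne_zero]
    have hd : (ProbabilityTheory.gaussianPDF 0 1) = fun x =>
        ((ProbabilityTheory.gaussianPDFReal 0 1 x).toNNReal : ENNReal) := rfl
    rw [hd, integral_withDensity_eq_integral_smul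
      ((ProbabilityTheory.measurable_gaussianPDFReal 0 1).real_toNNReal) f]
    refine integral_congr_ae (ae_of_all _ fun x => ?_)
    simp only [NNReal.smul_def, smul_eq_mul]
    rw [Real.coe_toNNReal _ (ProbabilityTheory.gaussianPDFReal_nonneg 0 1 x), hpdf]
  -- Integrability
  have hφcont : Continuous φ := by fun_prop
  have hfcont : Continuous f := by
    rw [hf]; fun_prop
  have hφint : Integrable φ := hpdfe ▸ ProbabilityTheory.integrable_gaussianPDFReal 0 1
  have hf01 : ∀ x, 0 ≤ f x ∧ f x ≤ 1 := by
    intro x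
    refine ⟨Real.exp_nonneg _, ?_⟩
    rw [hf]
    calc Real.exp (-(B * max (|a * x + η| - κ) 0 ^ 2)) ≤ Real.exp 0 := by
          apply Real.exp_le_exp.mpr
          have : 0 ≤ B * max (|a * x + η| - κ) 0 ^ 2 := by positivity
          linarith
      _ = 1 := Real.exp_zero
  have hφ0 : ∀ x, 0 ≤ φ x := fun x => by
    rw [hφ]; positivity
  have hgint : Integrable (fun x => φ x * f x) := by
    refine hφint.mono ((hφcont.mul hfcont).aestronglyMeasurable) (ae_of_all _ fun x => ?_)
    rw [Real.norm_eq_abs, Real.norm_eq_abs, abs_of_nonneg (mul_nonneg (hφ0 x) (hf01 x).1),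
      abs_of_nonneg (hφ0 x)]
    calc φ x * f x ≤ φ x * 1 := mul_le_mul_of_nonneg_left (hf01 x).2 (hφ0 x)
      _ = φ x := mul_one _
  set c₁ : ℝ := (-κ - η) / a with hc₁
  set c₂ : ℝ := (κ - η) / a with hc₂
  have hc : c₁ ≤ c₂ := by
    rw [hc₁, hc₂, div_le_div_iff₀ ha ha]
    nlinarith
  -- Splitting
  have hsplit : (∫ x in Set.Iic c₁, φ x * f x) + ((∫ x in Set.Ioc c₁ c₂, φ x * f x)
      + (∫ x in Set.Ioi c₂, φ x * f x)) = ∫ x, φ x * f x := by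
    rw [← setIntegral_union (Set.Ioc_disjoint_Ioi le_rfl) measurableSet_Ioi
        hgint.integrableOn hgint.integrableOn, Set.Ioc_union_Ioi_eq_Ioi hc,
      ← setIntegral_union (Set.Iic_disjoint_Ioi le_rfl) measurableSet_Ioi
        hgint.integrableOn hgint.integrableOn, Set.Iic_union_Ioi, setIntegral_univ]
  -- CDF of pieces of φ
  have hcdf : ∀ c : ℝ, ∫ x in Set.Iic c, φ x = stdGaussianCDF c := by
    intro c
    rw [stdGaussianCDF, ← hC, ← integral_const_mul]
  -- Middle piece
  have hmid : ∫ x in Set.Ioc c₁ c₂, φ x * f x = stdGaussianCDF c₂ - stdGaussianCDF c₁ := by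
    have h1 : ∫ x in Set.Ioc c₁ c₂, φ x * f x = ∫ x in Set.Ioc c₁ c₂, φ x := by
      refine setIntegral_congr_fun measurableSet_Ioc fun x hx => ?_
      have hl : -κ - η < x * a := (div_lt_iff₀ ha).mp hx.1
      have hr : x * a ≤ κ - η := (le_div_iff₀ ha).mp hx.2
      have hmax : max (|a * x + η| - κ) 0 = 0 := by
        apply max_eq_right
        rw [sub_nonpos]
        exact abs_le.mpr ⟨by linarith, by linarith⟩
      rw [hf]
      simp only [hmax]
      norm_num
    have h3 : (∫ x in Set.Iic c₁, φ x) + ∫ x in Set.Ioc c₁ c₂, φ x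
        = ∫ x in Set.Iic c₂, φ x := by
      rw [← setIntegral_union (Set.Iic_disjoint_Ioc le_rfl) measurableSet_Ioc
        hφint.integrableOn hφint.integrableOn, Set.Iic_union_Ioc_eq_Iic hc]
    rw [h1, ← hcdf, ← hcdf]
    linarith
  -- Right piece
  have hright : ∫ x in Set.Ioi c₂, φ x * f x
      = (1 / s) * (Real.exp (-(B * (η - κ) ^ 2) / s ^ 2)
          * stdGaussianCDF ((η - κ) / (a * s))) := by
    have h1 : ∀ x ∈ Set.Ioi c₂, φ x * f x
        = (C * Real.exp (-(B * (η - κ) ^ 2) / s ^ 2))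
            * Real.exp (-(s * x + 2 * a * B * (η - κ) / s) ^ 2 / 2) := by
      intro x hx
      have hl : κ - η < x * a := (div_lt_iff₀ ha).mp hx
      have h2 : κ ≤ a * x + η := by linarith
      have habs : |a * x + η| = a * x + η := abs_of_nonneg (by linarith)
      have hmax : max (|a * x + η| - κ) 0 = a * x + (η - κ) := by
        rw [habs]; rw [max_eq_left (by linarith)]; ring
      have key : -x ^ 2 / 2 + -(B * (a * x + (η - κ)) ^ 2)
          = -(B * (η - κ) ^ 2) / s ^ 2 + -(s * x + 2 * a * B * (η - κ) / s) ^ 2 / 2 := by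
        have hexp : (s * x + 2 * a * B * (η - κ) / s) ^ 2
            = s ^ 2 * x ^ 2 + 4 * a * B * (η - κ) * x + (2 * a * B * (η - κ)) ^ 2 / s ^ 2 := by
          field_simp
          ring
        rw [hexp, hs2]
        field_simp
        ring
      rw [hφ, hf]
      simp only [hmax]
      rw [show C * Real.exp (-x ^ 2 / 2) * Real.exp (-(B * (a * x + (η - κ)) ^ 2))
          = C * Real.exp (-x ^ 2 / 2 + -(B * (a * x + (η - κ)) ^ 2)) from by
            rw [Real.exp_add]; ring,
        key, Real.exp_add, ← mul_assoc]
    rw [setIntegral_congr_fun measurableSet_Ioi h1, integral_const_mul,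
      int_Ioi s (2 * a * B * (η - κ) / s) c₂ hspos]
    have hb : -(s * c₂ + 2 * a * B * (η - κ) / s) = (η - κ) / (a * s) := by
      rw [hc₂]
      field_simp
      linear_combination (η - κ) * hs2
    rw [hb, stdGaussianCDF, ← hC]
    field_simp
  -- Left piece
  have hleft : ∫ x in Set.Iic c₁, φ x * f x
      = (1 / s) * (Real.exp (-(B * (η + κ) ^ 2) / s ^ 2)
          * stdGaussianCDF (-((η + κ) / (a * s)))) := by
    have h1 : ∀ x ∈ Set.Iic c₁, φ x * f x
        = (C * Real.exp (-(B * (η + κ) ^ 2) / s ^ 2))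
            * Real.exp (-(s * x + 2 * a * B * (η + κ) / s) ^ 2 / 2) := by
      intro x hx
      have hl : x * a ≤ -κ - η := (le_div_iff₀ ha).mp hx
      have h2 : a * x + η ≤ -κ := by linarith
      have habs : |a * x + η| = -(a * x + η) := abs_of_nonpos (by linarith)
      have hmax : max (|a * x + η| - κ) 0 = -(a * x + (η + κ)) := by
        rw [habs]; rw [max_eq_left (by linarith)]; ring
      have key : -x ^ 2 / 2 + -(B * (-(a * x + (η + κ))) ^ 2)
          = -(B * (η + κ) ^ 2) / s ^ 2 + -(s * x + 2 * a * B * (η + κ) / s) ^ 2 / 2 := by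
        have hexp : (s * x + 2 * a * B * (η + κ) / s) ^ 2
            = s ^ 2 * x ^ 2 + 4 * a * B * (η + κ) * x + (2 * a * B * (η + κ)) ^ 2 / s ^ 2 := by
          field_simp
          ring
        rw [hexp, hs2]
        field_simp
        ring
      rw [hφ, hf]
      simp only [hmax]
      rw [show C * Real.exp (-x ^ 2 / 2) * Real.exp (-(B * (-(a * x + (η + κ))) ^ 2))
          = C * Real.exp (-x ^ 2 / 2 + -(B * (-(a * x + (η + κ))) ^ 2)) from by
            rw [Real.exp_add]; ring,
        key, Real.exp_add, ← mul_assoc]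
    rw [setIntegral_congr_fun measurableSet_Iic h1, integral_const_mul,
      int_Iic s (2 * a * B * (η + κ) / s) c₁ hspos]
    have hb : s * c₁ + 2 * a * B * (η + κ) / s = -((η + κ) / (a * s)) := by
      rw [hc₁]
      field_simp
      linear_combination (-η - κ) * hs2
    rw [hb, stdGaussianCDF, ← hC]
    field_simp
  rw [show (∫ x, Real.exp (-(B * max (|a * x + η| - κ) 0 ^ 2))
      ∂(ProbabilityTheory.gaussianReal 0 1)) = ∫ x, f x ∂(ProbabilityTheory.gaussianReal 0 1)
      from rfl, step1, ← hsplit, hmid, hleft, hright]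
  rw [hc₁, hc₂]
  ring
end
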